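/- arXiv:1007.5099 — 2 statements merged into one kernel-verified Lean document; each statement's English description precedes it below -/
import Mathlib

section
/- Let P be a preorder and ω a profunctor on P. Define the right dual ω^⊥ to be the relation relating x to y iff for all z, ω z x implies ¬(y ≤ z), and the left dual ^⊥ω to be the relation relating x to y iff for all z, ω y z implies ¬(z ≤ x). Then ω^⊥ = ¬ω^rev = ^⊥ω, where ¬ω^rev relates x to y iff ω y x fails. That is, with the complement of the reverse ordering (≱) as dualising object, the left and right duals of every profunctor on P coincide and equal the complement of its reverse. -/
/-! Testing against `z = y` (resp. `z = x`) shows, by reflexivity, that a dual can only relate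
`x` to `y` when `ω y x` fails; conversely, if `ω y x` fails, no `z` with `ω z x` and `y ≤ z`
(resp. `ω y z` and `z ≤ x`) exists, since the profunctor condition would transport it to `ω y x`. -/

section ProfunctorDuals

variable {P : Type*} [Preorder P] {ω : P → P → Prop}

theorem forall_not_le_iff_not_of_profunctor
    (hω : ∀ a' a b b', a' ≤ a → ω a b → b ≤ b' → ω a' b') (x y : P) :
    (∀ z, ω z x → ¬ y ≤ z) ↔ ¬ ω y x := by
  refine ⟨fun h hyx => h y hyx le_rfl, fun h z hzx hyz => h ?_⟩
  exact hω y z x x hyz hzx le_rfl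

theorem forall_not_ge_iff_not_of_profunctor
    (hω : ∀ a' a b b', a' ≤ a → ω a b → b ≤ b' → ω a' b') (x y : P) :
    (∀ z, ω y z → ¬ z ≤ x) ↔ ¬ ω y x := by
  refine ⟨fun h hyx => h x hyx le_rfl, fun h z hyz hzx => h ?_⟩
  exact hω y y z x le_rfl hyz hzx

end ProfunctorDuals

/-- For a profunctor `ω` on a preorder `P`, with dualising object the complement of the
reverse ordering `≱`, the right dual `ω^⊥ (x, y) ↔ ∀ z, ω z x → ¬(y ≤ z)` and the
left dual `^⊥ω (x, y) ↔ ∀ z, ω y z → ¬(z ≤ x)` both coincide with the complement of the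
reverse relation `¬ ω^rev`. -/
theorem profunctor_duals_eq_neg_rev (P : Type*) [Preorder P] (ω : P → P → Prop)
    (hω : ∀ a' a b b', a' ≤ a → ω a b → b ≤ b' → ω a' b') :
    (fun x y => ∀ z, ω z x → ¬ (y ≤ z)) = (fun x y => ¬ ω y x) ∧
    (fun x y => ∀ z, ω y z → ¬ (z ≤ x)) = (fun x y => ¬ ω y x) :=
  ⟨funext₂ fun x y => propext (forall_not_le_iff_not_of_profunctor hω x y),
    funext₂ fun x y => propext (forall_not_ge_iff_not_of_profunctor hω x y)⟩
end

section
/- Let s be a set and ω a binary relation on s. With duals taken with respect to the complement of equality — ω^⊥(x,y) iff ∀ z, ω z x → z ≠ y, and ^⊥ω(x,y) iff ∀ z, ω y z → x ≠ z — double dualisation is the identity: ^⊥(ω^⊥) = ω and (^⊥ω)^⊥ = ω. Hence the complement of the equality relation is a dualising object for the monoidal poset of relations on s. -/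
theorem forall_ne_imp_ne_iff {α : Type*} (p : α → Prop) (x : α) :
    (∀ z, (∀ w, p w → w ≠ z) → x ≠ z) ↔ p x := by
  have avoids_iff (z : α) : (∀ w, p w → w ≠ z) ↔ ¬p z :=
    ⟨fun h hz => h z hz rfl, fun hz w hw hwz => hz (hwz ▸ hw)⟩
  simp only [avoids_iff]
  exact ⟨fun h => by_contra fun hx => h x hx rfl, fun hx z hz hxz => hz (hxz ▸ hx)⟩

theorem forall_ne_imp_ne_iff' {α : Type*} (p : α → Prop) (y : α) :
    (∀ z, (∀ w, p w → z ≠ w) → z ≠ y) ↔ p y := by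
  simpa only [ne_comm] using forall_ne_imp_ne_iff p y

/-- For a binary relation `ω` on a set `s`, with duals taken with respect to the
complement of equality — `ω^⊥ (x, y) ↔ ∀ z, ω z x → z ≠ y` and
`^⊥ω (x, y) ↔ ∀ z, ω y z → x ≠ z` — double dualisation is the identity:
`^⊥(ω^⊥) = ω` and `(^⊥ω)^⊥ = ω`.  Hence the complement of equality is a
dualising object for the monoidal poset of relations on `s`. -/
theorem rel_double_dual (s : Type*) (ω : s → s → Prop) :
    (fun x y => ∀ z, (∀ w, ω w y → w ≠ z) → x ≠ z) = ω ∧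
    (fun x y => ∀ z, (∀ w, ω x w → z ≠ w) → z ≠ y) = ω :=
  ⟨funext₂ fun x y => propext (forall_ne_imp_ne_iff (ω · y) x),
    funext₂ fun x y => propext (forall_ne_imp_ne_iff' (ω x) y)⟩
end
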